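/- Let n ≥ 1 and let (a_k)_{k≥0} be real numbers with a_k ≥ 0 for all k ≥ 1 and ∑_{k≥1} a_k < ∞, and define F : [−1,1] → ℝ by F(t) = a₀ − ∑_{k=1}^{∞} a_k tᵏ. For a Borel probability measure μ on the unit sphere S^{n−1} ⊂ ℝⁿ, set I_F(μ) = ∫∫ F(⟨x,y⟩) dμ(x)dμ(y). Then I_F(μ) ≤ I_F(σ) for every Borel probability measure μ on S^{n−1}, where σ is the uniform probability measure on S^{n−1}. Moreover, if a_k > 0 for every k ≥ 1, then σ is the unique maximizer: I_F(μ) = I_F(σ) implies μ = σ. -/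

import Mathlib

/-!
Write `x^{⊗k}` for the `k`-th tensor power of `x` and `m_k(μ) = ∫ x^{⊗k} dμ` for the `k`-th moment
tensor of `μ`. Since `⟨x, y⟩^k = ⟨x^{⊗k}, y^{⊗k}⟩`, expanding `F(t) = ∑ c_k t^k` (`c_0 = a₀`,
`c_k = -a_k`) gives `I_F(μ) = ∑ c_k ‖m_k(μ)‖²`. Rotation invariance of `σ` makes
`x ↦ ∫ ⟨x, y⟩^k dσ(y)` constant on the sphere, so `⟨m_k(μ), m_k(σ)⟩ = ‖m_k(σ)‖²` and
`I_F(μ) - I_F(σ) = -∑_{k ≥ 1} a_k ‖m_k(μ) - m_k(σ)‖² ≤ 0`. If every `a_k` is positive, equality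
forces `m_k(μ) = m_k(σ)` for all `k`; as `μ` and `σ` live on the unit ball, their characteristic
functions are the exponential series in these moments, hence agree, and `μ = σ`.
-/

open MeasureTheory
open scoped RealInnerProductSpace Nat

section TensorPower

variable {ι : Type*}

noncomputable def tensorPow (k : ℕ) (x : EuclideanSpace ℝ ι) : EuclideanSpace ℝ (Fin k → ι) :=
  WithLp.toLp 2 fun f => ∏ i, x (f i)

@[fun_prop]
lemma continuous_tensorPow (k : ℕ) : Continuous (tensorPow (ι := ι) k) :=
  (PiLp.continuous_toLp 2 _).comp <| continuous_pi fun f =>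
    continuous_finsetProd _ fun i _ => (EuclideanSpace.proj (f i)).continuous

variable [Fintype ι]

lemma inner_tensorPow (k : ℕ) (x y : EuclideanSpace ℝ ι) :
    ⟪tensorPow k x, tensorPow k y⟫ = ⟪x, y⟫ ^ k := by
  simp only [tensorPow, PiLp.inner_apply, RCLike.inner_apply, conj_trivial]
  rw [← Fin.prod_const, Finset.prod_univ_sum, Fintype.piFinset_univ]
  exact Finset.sum_congr rfl fun f _ => Finset.prod_mul_distrib.symm

lemma norm_tensorPow (k : ℕ) (x : EuclideanSpace ℝ ι) : ‖tensorPow k x‖ = ‖x‖ ^ k := by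
  refine (pow_left_inj₀ (norm_nonneg _) (by positivity) two_ne_zero).1 ?_
  rw [← real_inner_self_eq_norm_sq, inner_tensorPow, real_inner_self_eq_norm_sq, ← pow_mul,
    ← pow_mul, mul_comm]

lemma norm_tensorPow_le_one {x : EuclideanSpace ℝ ι} (hx : ‖x‖ ≤ 1) (k : ℕ) :
    ‖tensorPow k x‖ ≤ 1 := by
  rw [norm_tensorPow]
  exact pow_le_one₀ (norm_nonneg x) hx

noncomputable def momentTensor (μ : Measure (EuclideanSpace ℝ ι)) (k : ℕ) :
    EuclideanSpace ℝ (Fin k → ι) :=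
  ∫ x, tensorPow k x ∂μ

variable {μ ν : Measure (EuclideanSpace ℝ ι)} {k : ℕ}

lemma momentTensor_zero [IsProbabilityMeasure μ] : momentTensor μ 0 = tensorPow 0 0 := by
  have hconst : ∀ x : EuclideanSpace ℝ ι, tensorPow 0 x = tensorPow 0 0 := fun x => by
    simp [tensorPow]
  simp [momentTensor, hconst]

lemma integrable_tensorPow [IsFiniteMeasure μ] (hμ : ∀ᵐ x ∂μ, ‖x‖ ≤ 1) (k : ℕ) :
    Integrable (tensorPow k) μ :=
  .of_bound (continuous_tensorPow k).aestronglyMeasurable 1 <|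
    hμ.mono fun _ hx => norm_tensorPow_le_one hx k

lemma norm_momentTensor_le [IsProbabilityMeasure μ] (hμ : ∀ᵐ x ∂μ, ‖x‖ ≤ 1) :
    ‖momentTensor μ k‖ ≤ 1 := by
  simpa [momentTensor] using norm_integral_le_of_norm_le_const (μ := μ) <|
    hμ.mono fun _ hx => norm_tensorPow_le_one hx k

lemma integral_inner_pow (hν : Integrable (tensorPow k) ν) (x : EuclideanSpace ℝ ι) :
    ∫ y, ⟪x, y⟫ ^ k ∂ν = ⟪tensorPow k x, momentTensor ν k⟫ := by
  rw [momentTensor, ← integral_inner hν]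
  simp_rw [inner_tensorPow]

lemma integral_integral_inner_pow (hμ : Integrable (tensorPow k) μ)
    (hν : Integrable (tensorPow k) ν) :
    ∫ x, ∫ y, ⟪x, y⟫ ^ k ∂ν ∂μ = ⟪momentTensor μ k, momentTensor ν k⟫ := by
  simp_rw [integral_inner_pow hν, real_inner_comm (momentTensor ν k)]
  exact integral_inner hμ _

end TensorPower

lemma abs_mul_pow_le_abs (c : ℝ) {t : ℝ} (ht : |t| ≤ 1) (k : ℕ) : |c * t ^ k| ≤ |c| := by
  rw [abs_mul, abs_pow]
  exact mul_le_of_le_one_right (abs_nonneg c) (pow_le_one₀ (abs_nonneg t) ht)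

lemma abs_real_inner_le_one {E : Type*} [NormedAddCommGroup E] [InnerProductSpace ℝ E] {x y : E}
    (hx : ‖x‖ ≤ 1) (hy : ‖y‖ ≤ 1) : |⟪x, y⟫| ≤ 1 :=
  (abs_real_inner_le_norm x y).trans (mul_le_one₀ hx (norm_nonneg y) hy)

section PowerSeriesKernel

variable {ι : Type*} [Fintype ι] {μ ν : Measure (EuclideanSpace ℝ ι)}
  {c : ℕ → ℝ} {G : ℝ → ℝ}

lemma hasSum_integral_comp_inner [IsFiniteMeasure ν] (hc : Summable fun k => |c k|)
    (hG : ∀ t, |t| ≤ 1 → HasSum (fun k => c k * t ^ k) (G t))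
    (hν : ∀ᵐ y ∂ν, ‖y‖ ≤ 1) {x : EuclideanSpace ℝ ι} (hx : ‖x‖ ≤ 1) :
    HasSum (fun k => c k * ⟪tensorPow k x, momentTensor ν k⟫) (∫ y, G ⟪x, y⟫ ∂ν) := by
  have h := hasSum_integral_of_dominated_convergence (μ := ν)
    (F := fun k y => c k * ⟪x, y⟫ ^ k) (fun k _ => |c k|)
    (fun k => by fun_prop)
    (fun k => hν.mono fun y hy => abs_mul_pow_le_abs _ (abs_real_inner_le_one hx hy) k)
    (.of_forall fun _ => hc) (integrable_const _)
    (hν.mono fun y hy => hG _ (abs_real_inner_le_one hx hy))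
  simpa only [integral_const_mul, integral_inner_pow (integrable_tensorPow hν _)] using h

lemma hasSum_integral_integral_comp_inner [IsProbabilityMeasure μ] [IsProbabilityMeasure ν]
    (hc : Summable fun k => |c k|) (hG : ∀ t, |t| ≤ 1 → HasSum (fun k => c k * t ^ k) (G t))
    (hμ : ∀ᵐ x ∂μ, ‖x‖ ≤ 1) (hν : ∀ᵐ y ∂ν, ‖y‖ ≤ 1) :
    HasSum (fun k => c k * ⟪momentTensor μ k, momentTensor ν k⟫)
      (∫ x, ∫ y, G ⟪x, y⟫ ∂ν ∂μ) := by
  have hbound : ∀ k x, ‖x‖ ≤ 1 → |⟪tensorPow k x, momentTensor ν k⟫| ≤ 1 := fun k x hx =>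
    abs_real_inner_le_one (norm_tensorPow_le_one hx k) (norm_momentTensor_le hν)
  have h := hasSum_integral_of_dominated_convergence (μ := μ)
    (F := fun k x => c k * ⟪tensorPow k x, momentTensor ν k⟫) (fun k _ => |c k|)
    (fun k => by fun_prop)
    (fun k => hμ.mono fun x hx => by
      simpa using mul_le_of_le_one_right (abs_nonneg (c k)) (hbound k x hx))
    (.of_forall fun _ => hc) (integrable_const _)
    (hμ.mono fun x hx => hasSum_integral_comp_inner hc hG hν hx)
  simpa only [integral_const_mul, ← integral_inner_pow (integrable_tensorPow hν _),
    integral_integral_inner_pow (integrable_tensorPow hμ _) (integrable_tensorPow hν _)] using h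

end PowerSeriesKernel

section RotationInvariant

variable {E : Type*} [NormedAddCommGroup E] [InnerProductSpace ℝ E] [MeasurableSpace E]
  [BorelSpace E] {σ : Measure E}

lemma integral_comp_inner_eq_of_norm_eq (hσ : ∀ Q : E ≃ₗᵢ[ℝ] E, σ.map Q = σ) (g : ℝ → ℝ)
    {x x' : E} (h : ‖x‖ = ‖x'‖) : ∫ y, g ⟪x, y⟫ ∂σ = ∫ y, g ⟪x', y⟫ ∂σ := by
  set Q := Submodule.reflection (ℝ ∙ (x' - x))ᗮ
  have hQ : MeasurePreserving Q.toHomeomorph.toMeasurableEquiv σ σ :=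
    ⟨Q.continuous.measurable, hσ Q⟩
  calc ∫ y, g ⟪x, y⟫ ∂σ = ∫ y, g ⟪Q x', Q y⟫ ∂σ := by
        rw [Submodule.reflection_sub h.symm]
        exact (hQ.integral_comp' (fun y => g ⟪x, y⟫)).symm
    _ = ∫ y, g ⟪x', y⟫ ∂σ := by simp_rw [LinearIsometryEquiv.inner_map_map]

lemma integral_integral_comp_inner_eq_of_invariant (hσ : ∀ Q : E ≃ₗᵢ[ℝ] E, σ.map Q = σ)
    (g : ℝ → ℝ) {μ ν : Measure E} [IsProbabilityMeasure μ] [IsProbabilityMeasure ν]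
    (hμ : ∀ᵐ x ∂μ, ‖x‖ = 1) (hν : ∀ᵐ x ∂ν, ‖x‖ = 1) :
    ∫ x, ∫ y, g ⟪x, y⟫ ∂σ ∂μ = ∫ x, ∫ y, g ⟪x, y⟫ ∂σ ∂ν := by
  obtain ⟨x₀, hx₀⟩ := hμ.exists
  have hconst : ∀ (ρ : Measure E) [IsProbabilityMeasure ρ], (∀ᵐ x ∂ρ, ‖x‖ = 1) →
      ∫ x, ∫ y, g ⟪x, y⟫ ∂σ ∂ρ = ∫ y, g ⟪x₀, y⟫ ∂σ := fun ρ _ hρ => by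
    rw [integral_congr_ae (hρ.mono fun x hx =>
      integral_comp_inner_eq_of_norm_eq hσ g (hx.trans hx₀.symm))]
    simp
  rw [hconst μ hμ, hconst ν hν]

end RotationInvariant

section Energy

variable {ι : Type*} [Fintype ι] {μ σ : Measure (EuclideanSpace ℝ ι)} {c : ℕ → ℝ} {G : ℝ → ℝ}

lemma norm_sq_momentTensor_eq_add [IsProbabilityMeasure μ] [IsProbabilityMeasure σ]
    (hσ : ∀ Q : EuclideanSpace ℝ ι ≃ₗᵢ[ℝ] EuclideanSpace ℝ ι, σ.map Q = σ)
    (hμ : ∀ᵐ x ∂μ, ‖x‖ = 1) (hσ₁ : ∀ᵐ x ∂σ, ‖x‖ = 1) (k : ℕ) :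
    ‖momentTensor μ k‖ ^ 2 =
      ‖momentTensor σ k‖ ^ 2 + ‖momentTensor μ k - momentTensor σ k‖ ^ 2 := by
  have hint : ∀ (ρ : Measure (EuclideanSpace ℝ ι)) [IsProbabilityMeasure ρ],
      (∀ᵐ x ∂ρ, ‖x‖ = 1) → Integrable (tensorPow k) ρ := fun ρ _ hρ =>
    integrable_tensorPow (hρ.mono fun x hx => hx.le) k
  have h : ⟪momentTensor μ k, momentTensor σ k⟫ = ⟪momentTensor σ k, momentTensor σ k⟫ := by
    rw [← integral_integral_inner_pow (hint μ hμ) (hint σ hσ₁),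
      ← integral_integral_inner_pow (hint σ hσ₁) (hint σ hσ₁)]
    exact integral_integral_comp_inner_eq_of_invariant hσ (· ^ k) hμ hσ₁
  rw [norm_sub_sq_real, h, real_inner_self_eq_norm_sq]
  ring

lemma hasSum_energy_sub_energy [IsProbabilityMeasure μ] [IsProbabilityMeasure σ]
    (hσ : ∀ Q : EuclideanSpace ℝ ι ≃ₗᵢ[ℝ] EuclideanSpace ℝ ι, σ.map Q = σ)
    (hμ : ∀ᵐ x ∂μ, ‖x‖ = 1) (hσ₁ : ∀ᵐ x ∂σ, ‖x‖ = 1)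
    (hc : Summable fun k => |c k|) (hG : ∀ t, |t| ≤ 1 → HasSum (fun k => c k * t ^ k) (G t)) :
    HasSum (fun k => c k * ‖momentTensor μ k - momentTensor σ k‖ ^ 2)
      ((∫ x, ∫ y, G ⟪x, y⟫ ∂μ ∂μ) - ∫ x, ∫ y, G ⟪x, y⟫ ∂σ ∂σ) := by
  have hball : ∀ (ρ : Measure (EuclideanSpace ℝ ι)), (∀ᵐ x ∂ρ, ‖x‖ = 1) → ∀ᵐ x ∂ρ, ‖x‖ ≤ 1 :=
    fun ρ hρ => hρ.mono fun x hx => hx.le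
  have h := (hasSum_integral_integral_comp_inner hc hG (hball μ hμ) (hball μ hμ)).sub
    (hasSum_integral_integral_comp_inner hc hG (hball σ hσ₁) (hball σ hσ₁))
  simp_rw [real_inner_self_eq_norm_sq, norm_sq_momentTensor_eq_add hσ hμ hσ₁, mul_add,
    add_sub_cancel_left] at h
  exact h

end Energy

section Uniqueness

variable {ι : Type*} [Fintype ι] {μ ν : Measure (EuclideanSpace ℝ ι)}

lemma hasSum_exp_mul_I (r : ℝ) :
    HasSum (fun k => Complex.I ^ k / k ! * ((r ^ k : ℝ) : ℂ)) (Complex.exp (r * Complex.I)) := by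
  have hterm : (fun k : ℕ => Complex.I ^ k / k ! * ((r ^ k : ℝ) : ℂ)) =
      fun k => ((r : ℂ) * Complex.I) ^ k / k ! := by
    funext k
    push_cast
    ring
  rw [hterm, Complex.exp_eq_exp_ℂ]
  exact NormedSpace.expSeries_div_hasSum_exp _

lemma hasSum_charFun [IsFiniteMeasure μ] (hμ : ∀ᵐ x ∂μ, ‖x‖ ≤ 1) (t : EuclideanSpace ℝ ι) :
    HasSum (fun k => Complex.I ^ k / k ! * ⟪tensorPow k t, momentTensor μ k⟫) (charFun μ t) := by
  have hbound : ∀ k, ∀ᵐ x ∂μ, ‖Complex.I ^ k / k ! * ((⟪t, x⟫ ^ k : ℝ) : ℂ)‖ ≤ ‖t‖ ^ k / k ! :=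
    fun k => hμ.mono fun x hx => by
      rw [norm_mul, norm_div, norm_pow, Complex.norm_I, one_pow, Complex.norm_natCast,
        Complex.norm_real, Real.norm_eq_abs, abs_pow, one_div_mul_eq_div]
      gcongr
      exact (abs_real_inner_le_norm t x).trans (mul_le_of_le_one_right (norm_nonneg t) hx)
  have h := hasSum_integral_of_dominated_convergence (fun k _ => ‖t‖ ^ k / k !)
    (fun k => by fun_prop) hbound (.of_forall fun _ => Real.summable_pow_div_factorial _)
    (integrable_const _) (.of_forall fun x => hasSum_exp_mul_I ⟪t, x⟫)
  simp_rw [charFun_apply, real_inner_comm t]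
  simpa only [integral_const_mul, integral_complex_ofReal,
    integral_inner_pow (integrable_tensorPow hμ _)] using h

lemma ext_of_momentTensor_eq [IsFiniteMeasure μ] [IsFiniteMeasure ν]
    (hμ : ∀ᵐ x ∂μ, ‖x‖ ≤ 1) (hν : ∀ᵐ x ∂ν, ‖x‖ ≤ 1)
    (h : ∀ k, momentTensor μ k = momentTensor ν k) : μ = ν :=
  Measure.ext_of_charFun <| funext fun t =>
    (hasSum_charFun hμ t).unique (by simpa only [h] using hasSum_charFun hν t)

end Uniqueness

lemma ae_norm_eq_one_of_measure_sphere_eq_one {E : Type*} [NormedAddCommGroup E]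
    [MeasurableSpace E] [OpensMeasurableSpace E] {μ : Measure E} [IsProbabilityMeasure μ]
    (hμ : μ (Metric.sphere 0 1) = 1) : ∀ᵐ x ∂μ, ‖x‖ = 1 := by
  have hS : ∀ᵐ x ∂μ, x ∈ Metric.sphere (0 : E) 1 :=
    (mem_ae_iff_prob_eq_one Metric.isClosed_sphere.measurableSet).2 hμ
  exact hS.mono fun _ => mem_sphere_zero_iff_norm.1

def kernelCoeff (a : ℕ → ℝ) : ℕ → ℝ
  | 0 => a 0
  | k + 1 => -a (k + 1)

lemma summable_abs_kernelCoeff {a : ℕ → ℝ} (ha : ∀ k : ℕ, 1 ≤ k → 0 ≤ a k)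
    (hsum : Summable (fun k : ℕ => a (k + 1))) : Summable fun k => |kernelCoeff a k| :=
  (summable_nat_add_iff 1).1 <| hsum.congr fun k => by
    simp [kernelCoeff, abs_of_nonneg (ha (k + 1) k.succ_pos)]

lemma hasSum_kernelCoeff_mul_pow {a : ℕ → ℝ} (ha : ∀ k : ℕ, 1 ≤ k → 0 ≤ a k)
    (hsum : Summable (fun k : ℕ => a (k + 1))) {t : ℝ} (ht : |t| ≤ 1) :
    HasSum (fun k => kernelCoeff a k * t ^ k) (a 0 - ∑' k, a (k + 1) * t ^ (k + 1)) := by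
  have hs : Summable fun k => a (k + 1) * t ^ (k + 1) := hsum.of_norm_bounded fun k => by
    simpa [abs_of_nonneg (ha (k + 1) k.succ_pos)] using abs_mul_pow_le_abs (a (k + 1)) ht (k + 1)
  refine (hasSum_nat_add_iff' 1).1 ?_
  simpa [kernelCoeff] using hs.hasSum.neg

theorem uniform_maximizes_energy_general (n : ℕ)
    (a : ℕ → ℝ) (ha : ∀ k : ℕ, 1 ≤ k → 0 ≤ a k)
    (hsum : Summable (fun k : ℕ => a (k + 1)))
    (F : ℝ → ℝ)
    (hF : ∀ t ∈ Set.Icc (-1 : ℝ) 1, F t = a 0 - ∑' k : ℕ, a (k + 1) * t ^ (k + 1))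
    (σ : Measure (EuclideanSpace ℝ (Fin n))) [IsProbabilityMeasure σ]
    (hσs : σ (Metric.sphere (0 : EuclideanSpace ℝ (Fin n)) 1) = 1)
    (hσrot : ∀ Q : EuclideanSpace ℝ (Fin n) ≃ₗᵢ[ℝ] EuclideanSpace ℝ (Fin n),
      Measure.map Q σ = σ) :
    (∀ μ : Measure (EuclideanSpace ℝ (Fin n)), IsProbabilityMeasure μ →
      μ (Metric.sphere (0 : EuclideanSpace ℝ (Fin n)) 1) = 1 →
      (∫ x, ∫ y, F ⟪x, y⟫ ∂μ ∂μ) ≤ ∫ x, ∫ y, F ⟪x, y⟫ ∂σ ∂σ)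
    ∧ ((∀ k : ℕ, 1 ≤ k → 0 < a k) →
      ∀ μ : Measure (EuclideanSpace ℝ (Fin n)), IsProbabilityMeasure μ →
      μ (Metric.sphere (0 : EuclideanSpace ℝ (Fin n)) 1) = 1 →
      (∫ x, ∫ y, F ⟪x, y⟫ ∂μ ∂μ) = (∫ x, ∫ y, F ⟪x, y⟫ ∂σ ∂σ) → μ = σ) := by
  have hσ₁ := ae_norm_eq_one_of_measure_sphere_eq_one hσs
  have hgap : ∀ μ, IsProbabilityMeasure μ → μ (Metric.sphere 0 1) = 1 →
      HasSum (fun k => kernelCoeff a k * ‖momentTensor μ k - momentTensor σ k‖ ^ 2)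
        ((∫ x, ∫ y, F ⟪x, y⟫ ∂μ ∂μ) - ∫ x, ∫ y, F ⟪x, y⟫ ∂σ ∂σ) := fun μ _ hμ =>
    hasSum_energy_sub_energy hσrot (ae_norm_eq_one_of_measure_sphere_eq_one hμ) hσ₁
      (summable_abs_kernelCoeff ha hsum) fun t ht =>
        hF t (abs_le.1 ht) ▸ hasSum_kernelCoeff_mul_pow ha hsum ht
  have hterm : ∀ μ, IsProbabilityMeasure μ → ∀ k,
      kernelCoeff a k * ‖momentTensor μ k - momentTensor σ k‖ ^ 2 ≤ 0 := by
    rintro μ _ (_ | k)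
    · simp [momentTensor_zero]
    · exact mul_nonpos_of_nonpos_of_nonneg (neg_nonpos.2 (ha _ k.succ_pos)) (sq_nonneg _)
  refine ⟨fun μ hμP hμ => sub_nonpos.1 ((hgap μ hμP hμ).nonpos (hterm μ hμP)),
    fun hpos μ hμP hμ heq => ?_⟩
  have hzero := (hasSum_zero_iff_of_nonneg fun k => neg_nonneg.2 (hterm μ hμP k)).1
    (by simpa [heq] using (hgap μ hμP hμ).neg)
  refine ext_of_momentTensor_eq ((ae_norm_eq_one_of_measure_sphere_eq_one hμ).mono fun _ h => h.le)
    (hσ₁.mono fun _ h => h.le) fun k => ?_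
  rcases k with _ | k
  · simp [momentTensor_zero]
  · simpa [kernelCoeff, (hpos _ k.succ_pos).ne', sub_eq_zero] using congrFun hzero (k + 1)

/-- For `F(t) = a₀ - ∑_{k≥1} a_k tᵏ` with `a_k ≥ 0`, the uniform measure maximizes
the energy `I_F(μ) = ∫∫ F(⟨x,y⟩) dμ dμ` over probability measures on `S^{n-1}`;
if moreover `a_k > 0` for all `k ≥ 1`, it is the unique maximizer. -/
theorem uniform_maximizes_energy (n : ℕ) (hn : 1 ≤ n)
    (a : ℕ → ℝ) (ha : ∀ k : ℕ, 1 ≤ k → 0 ≤ a k)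
    (hsum : Summable (fun k : ℕ => a (k + 1)))
    (F : ℝ → ℝ)
    (hF : ∀ t ∈ Set.Icc (-1 : ℝ) 1, F t = a 0 - ∑' k : ℕ, a (k + 1) * t ^ (k + 1))
    (σ : Measure (EuclideanSpace ℝ (Fin n))) [IsProbabilityMeasure σ]
    (hσs : σ (Metric.sphere (0 : EuclideanSpace ℝ (Fin n)) 1) = 1)
    (hσrot : ∀ Q : EuclideanSpace ℝ (Fin n) ≃ₗᵢ[ℝ] EuclideanSpace ℝ (Fin n),
      Measure.map Q σ = σ) :
    (∀ μ : Measure (EuclideanSpace ℝ (Fin n)), IsProbabilityMeasure μ →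
      μ (Metric.sphere (0 : EuclideanSpace ℝ (Fin n)) 1) = 1 →
      (∫ x, ∫ y, F ⟪x, y⟫ ∂μ ∂μ) ≤ ∫ x, ∫ y, F ⟪x, y⟫ ∂σ ∂σ)
    ∧ ((∀ k : ℕ, 1 ≤ k → 0 < a k) →
      ∀ μ : Measure (EuclideanSpace ℝ (Fin n)), IsProbabilityMeasure μ →
      μ (Metric.sphere (0 : EuclideanSpace ℝ (Fin n)) 1) = 1 →
      (∫ x, ∫ y, F ⟪x, y⟫ ∂μ ∂μ) = (∫ x, ∫ y, F ⟪x, y⟫ ∂σ ∂σ) → μ = σ) :=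
  uniform_maximizes_energy_general n a ha hsum F hF σ hσs hσrot
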